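/- arXiv:0907.1265 — 2 statements merged into one kernel-verified Lean document; each statement's English description precedes it below -/
import Mathlib

section
/- The map 𝔾 is μ-invariant: for every continuous function f on [0,1], ∫_0^1 𝔾(f)(θ) dμ(θ) = ∫_0^1 f(θ) dμ(θ). -/
open MeasureTheory

/-- Gauss measure on `[0,1]`: `dμ = dθ / (ln 2 · (1 + θ))`. -/
noncomputable def gaussMeasure : Measure ℝ :=
  (volume.restrict (Set.Icc (0 : ℝ) 1)).withDensity
    (fun θ => ENNReal.ofReal (1 / (Real.log 2 * (1 + θ))))

/-- The Gauss (Perron–Frobenius) operator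
`𝔾(f)(θ) = Σ_{s=1}^∞ f(1/(θ+s)) · (1+θ)/((θ+s)(θ+s+1))`;
the summation index `n : ℕ` corresponds to `s = n + 1`. -/
noncomputable def gaussOp (f : ℝ → ℝ) (θ : ℝ) : ℝ :=
  ∑' n : ℕ, f (1 / (θ + (n : ℝ) + 1)) *
    ((1 + θ) / ((θ + (n : ℝ) + 1) * (θ + (n : ℝ) + 2)))

/-! The substitution `u = 1 / (θ + s)` maps `[0, 1]` onto `[1 / (s + 1), 1 / s]` and turns the
`s`-th summand of `𝔾(f)(θ) / (1 + θ)` into `f(u) / (1 + u) du`. For `s = 1, 2, …` these intervals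
tile `(0, 1]`, so summing over `s` gives back `∫ f dμ`. Sum and integral may be interchanged
because the same computation applied to `|f|` gives a convergent series. -/

open Set

theorem integral_gaussMeasure (g : ℝ → ℝ) :
    ∫ θ, g θ ∂gaussMeasure = (Real.log 2)⁻¹ * ∫ θ in Ioc 0 1, g θ / (1 + θ) := by
  rw [gaussMeasure, integral_withDensity_eq_integral_toReal_smul (by fun_prop)
    (ae_of_all _ fun _ => ENNReal.ofReal_lt_top), integral_Icc_eq_integral_Ioc,
    ← integral_const_mul]
  refine setIntegral_congr_fun measurableSet_Ioc fun θ hθ => ?_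
  have : 0 < 1 + θ := by linarith [hθ.1]
  rw [ENNReal.toReal_ofReal (by positivity), smul_eq_mul]
  field_simp

theorem iUnion_Ioc_one_div_nat :
    ⋃ n : ℕ, Ioc (1 / ((n : ℝ) + 1 + 1)) (1 / ((n : ℝ) + 1)) = Ioc 0 1 := by
  ext x
  simp only [mem_iUnion, mem_Ioc]
  constructor
  · rintro ⟨n, hlt, hle⟩
    exact ⟨(by positivity : (0 : ℝ) < 1 / (n + 1 + 1)).trans hlt,
      hle.trans (div_le_one_of_le₀ (by linarith [n.cast_nonneg (α := ℝ)]) (by positivity))⟩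
  · rintro ⟨hx, hx1⟩
    have h1x : 0 ≤ 1 / x - 1 := by rw [sub_nonneg, one_le_div hx]; exact hx1
    refine ⟨⌊1 / x - 1⌋₊, (one_div_lt (by positivity) hx).2 ?_,
      (le_one_div hx (by positivity)).2 ?_⟩
    · linarith [Nat.lt_floor_add_one (1 / x - 1)]
    · linarith [Nat.floor_le h1x]

theorem hasSum_setIntegral_Ioc_one_div_nat {g : ℝ → ℝ} (hg : IntegrableOn g (Ioc 0 1)) :
    HasSum (fun n : ℕ => ∫ x in Ioc (1 / ((n : ℝ) + 1 + 1)) (1 / ((n : ℝ) + 1)), g x)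
      (∫ x in Ioc 0 1, g x) := by
  have hanti : Antitone fun n : ℕ => 1 / ((n : ℝ) + 1) := fun m n hmn =>
    one_div_le_one_div_of_le (by positivity) (by gcongr)
  rw [← iUnion_Ioc_one_div_nat] at hg ⊢
  refine hasSum_integral_iUnion (fun _ => measurableSet_Ioc) ?_ hg
  simpa using hanti.pairwise_disjoint_on_Ioc_succ

noncomputable def gaussTerm (f : ℝ → ℝ) (s θ : ℝ) : ℝ :=
  f (1 / (θ + s)) / ((θ + s) * (θ + s + 1))

theorem gaussOp_div_one_add (f : ℝ → ℝ) {θ : ℝ} (hθ : 1 + θ ≠ 0) :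
    gaussOp f θ / (1 + θ) = ∑' n : ℕ, gaussTerm f (n + 1) θ := by
  rw [gaussOp, ← tsum_div_const]
  congr 1 with n
  rw [gaussTerm, ← add_assoc, add_assoc θ (n : ℝ) 1, ← add_assoc]
  field_simp
  ring

theorem Icc_one_div_add_one_subset {s : ℝ} (hs : 1 ≤ s) :
    Icc (1 / (s + 1)) (1 / s) ⊆ Icc 0 1 :=
  Icc_subset_Icc (by positivity) (div_le_one_of_le₀ hs (by positivity))

theorem mapsTo_one_div_add {s : ℝ} (hs : 0 < s) :
    MapsTo (fun θ => 1 / (θ + s)) (Icc 0 1) (Icc (1 / (s + 1)) (1 / s)) := fun θ hθ =>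
  ⟨one_div_le_one_div_of_le (by linarith [hθ.1]) (by linarith [hθ.2]),
    one_div_le_one_div_of_le hs (by linarith [hθ.1])⟩

theorem continuousOn_gaussTerm {f : ℝ → ℝ} {s : ℝ} (hs : 0 < s)
    (hf : ContinuousOn f (Icc (1 / (s + 1)) (1 / s))) :
    ContinuousOn (gaussTerm f s) (Icc 0 1) := by
  have hpos : ∀ θ ∈ Icc (0 : ℝ) 1, 0 < θ + s := fun θ hθ => by linarith [hθ.1]
  refine (hf.comp (continuousOn_const.div (by fun_prop) fun θ hθ => (hpos θ hθ).ne')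
    (mapsTo_one_div_add hs)).div (by fun_prop) fun θ hθ => ?_
  have := hpos θ hθ
  positivity

theorem setIntegral_gaussTerm {f : ℝ → ℝ} {s : ℝ} (hs : 0 < s)
    (hf : ContinuousOn f (Icc (1 / (s + 1)) (1 / s))) :
    ∫ θ in Ioc 0 1, gaussTerm f s θ = ∫ u in Ioc (1 / (s + 1)) (1 / s), f u / (1 + u) := by
  have hpos : ∀ θ ∈ uIcc (0 : ℝ) 1, 0 < θ + s := fun θ hθ => by
    rw [uIcc_of_le zero_le_one] at hθ
    linarith [hθ.1]
  have hderiv : ∀ θ ∈ uIcc (0 : ℝ) 1,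
      HasDerivAt (fun θ => 1 / (θ + s)) (-1 / (θ + s) ^ 2) θ := fun θ hθ => by
    simpa [one_div] using ((hasDerivAt_id' θ).add_const s).fun_inv (hpos θ hθ).ne'
  have hg : ContinuousOn (fun u => f u / (1 + u)) (Icc (1 / (s + 1)) (1 / s)) :=
    hf.div (by fun_prop) fun u hu => by
      have : 0 < 1 / (s + 1) := by positivity
      linarith [hu.1]
  have hcov := intervalIntegral.integral_comp_mul_deriv' hderiv
    (continuousOn_const.div (by fun_prop) fun θ hθ => pow_ne_zero 2 (hpos θ hθ).ne')
    (hg.mono (by rw [uIcc_of_le zero_le_one]; exact (mapsTo_one_div_add hs).image_subset))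
  have hpt : EqOn (gaussTerm f s)
      (fun θ => -(((fun u => f u / (1 + u)) ∘ fun θ => 1 / (θ + s)) θ * (-1 / (θ + s) ^ 2)))
      (uIcc 0 1) := by
    intro θ hθ
    have := hpos θ hθ
    simp only [gaussTerm, Function.comp_apply]
    field_simp
  rw [← intervalIntegral.integral_of_le zero_le_one,
    ← intervalIntegral.integral_of_le (one_div_le_one_div_of_le hs (by linarith)),
    intervalIntegral.integral_congr hpt, intervalIntegral.integral_neg, hcov, zero_add,
    add_comm 1 s, intervalIntegral.integral_symm, neg_neg]

theorem hasSum_setIntegral_gaussTerm {f : ℝ → ℝ} (hf : ContinuousOn f (Icc 0 1)) :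
    HasSum (fun n : ℕ => ∫ θ in Ioc 0 1, gaussTerm f (n + 1) θ)
      (∫ u in Ioc 0 1, f u / (1 + u)) := by
  have hint : IntegrableOn (fun u => f u / (1 + u)) (Ioc 0 1) :=
    ((hf.div (by fun_prop) fun u hu => by linarith [hu.1]).integrableOn_compact
      isCompact_Icc).mono_set Ioc_subset_Icc_self
  convert hasSum_setIntegral_Ioc_one_div_nat hint using 1
  ext n
  exact setIntegral_gaussTerm (by positivity)
    (hf.mono (Icc_one_div_add_one_subset (le_add_of_nonneg_left n.cast_nonneg)))

theorem summable_setIntegral_norm_gaussTerm {f : ℝ → ℝ} (hf : ContinuousOn f (Icc 0 1)) :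
    Summable fun n : ℕ => ∫ θ in Ioc 0 1, ‖gaussTerm f (n + 1) θ‖ := by
  refine (hasSum_setIntegral_gaussTerm hf.norm).summable.congr fun n => ?_
  refine setIntegral_congr_fun measurableSet_Ioc fun θ hθ => ?_
  have : 0 < θ := hθ.1
  have : 0 < (θ + (n + 1)) * (θ + (n + 1) + 1) := by positivity
  rw [gaussTerm, gaussTerm, norm_div, Real.norm_of_nonneg this.le]

/-- `𝔾` is `μ`-invariant: for every continuous `f` on `[0,1]`,
`∫ 𝔾(f) dμ = ∫ f dμ`. -/
theorem gaussOp_mu_invariant (f : ℝ → ℝ)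
    (hf : ContinuousOn f (Set.Icc (0 : ℝ) 1)) :
    ∫ θ, gaussOp f θ ∂gaussMeasure = ∫ θ, f θ ∂gaussMeasure := by
  have hint (n : ℕ) : IntegrableOn (gaussTerm f (n + 1)) (Ioc 0 1) := by
    have hfn := hf.mono (Icc_one_div_add_one_subset (le_add_of_nonneg_left n.cast_nonneg))
    exact ((continuousOn_gaussTerm (by positivity) hfn).integrableOn_compact
      isCompact_Icc).mono_set Ioc_subset_Icc_self
  calc ∫ θ, gaussOp f θ ∂gaussMeasure
      = (Real.log 2)⁻¹ * ∫ θ in Ioc 0 1, ∑' n : ℕ, gaussTerm f (n + 1) θ := by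
        rw [integral_gaussMeasure]
        congr 1
        exact setIntegral_congr_fun measurableSet_Ioc fun θ hθ =>
          gaussOp_div_one_add f (by linarith [hθ.1])
    _ = (Real.log 2)⁻¹ * ∑' n : ℕ, ∫ θ in Ioc 0 1, gaussTerm f (n + 1) θ := by
        rw [integral_tsum_of_summable_integral_norm hint (summable_setIntegral_norm_gaussTerm hf)]
    _ = ∫ θ, f θ ∂gaussMeasure := by
        rw [(hasSum_setIntegral_gaussTerm hf).tsum_eq, integral_gaussMeasure]
end

section
/- For every continuous real-valued function f on [0,1] and all g, h ∈ L²(μ), ∫_0^1 f(θ) g(G(θ)) h(G(θ)) dμ(θ) = ∫_0^1 𝔾(f)(θ) g(θ) h(θ) dμ(θ); that is, V_G* M_f V_G = M_{𝔾(f)} as operators on L²(μ), where V_G(g) = g ∘ G and M_f denotes multiplication by f. -/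
open MeasureTheory

/-- The Gauss map `G(0) = 0`, `G(x) = 1/x - ⌊1/x⌋` for `x ≠ 0`. -/
noncomputable def gaussMap (x : ℝ) : ℝ := if x = 0 then 0 else 1 / x - ↑⌊1 / x⌋

/-! On `(1/(n+2), 1/(n+1)]` the Gauss map is a bijection onto `[0,1)`, with inverse branch
`θ ↦ 1/(θ+n+1)`. Changing variables on every branch gives `∫ Φ dμ = ∫ 𝔾Φ dμ` for each
`μ`-integrable `Φ`: the weight in `𝔾` is the Jacobian of the branch times the ratio of the Gauss
densities at the two ends. These weights telescope to `1`, so `G` preserves `μ`, and therefore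
`Φ = f · (g ∘ G) · (h ∘ G)` is integrable. Since `G` undoes every branch, `𝔾Φ = 𝔾f · g · h`. -/

open Set Filter
open scoped ENNReal

noncomputable section

def gaussDensity (θ : ℝ) : ℝ := 1 / (Real.log 2 * (1 + θ))

def gaussBranch (n : ℕ) (θ : ℝ) : ℝ := 1 / (θ + n + 1)

/-- The Jacobian `|(gaussBranch n)' θ|` times `gaussDensity (gaussBranch n θ) / gaussDensity θ`. -/
def gaussWeight (n : ℕ) (θ : ℝ) : ℝ := (1 + θ) / ((θ + n + 1) * (θ + n + 2))

end

lemma gaussOp_eq_tsum (f : ℝ → ℝ) (θ : ℝ) :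
    gaussOp f θ = ∑' n, f (gaussBranch n θ) * gaussWeight n θ := rfl

lemma gaussMap_eq_fract (x : ℝ) : gaussMap x = Int.fract (1 / x) := by
  by_cases hx : x = 0
  · simp [gaussMap, hx]
  · rw [gaussMap, if_neg hx, Int.fract]

lemma gaussMap_mem_Ico (x : ℝ) : gaussMap x ∈ Ico 0 1 := by
  rw [gaussMap_eq_fract]
  exact ⟨Int.fract_nonneg _, Int.fract_lt_one _⟩

lemma measurable_gaussMap : Measurable gaussMap := by
  rw [funext gaussMap_eq_fract]
  exact measurable_fract.comp (measurable_const.div measurable_id)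

lemma gaussMap_gaussBranch (n : ℕ) {θ : ℝ} (hθ : θ ∈ Ico 0 1) :
    gaussMap (gaussBranch n θ) = θ := by
  have hfloor : ⌊θ + n + 1⌋ = (n : ℤ) + 1 := by
    rw [Int.floor_eq_iff]
    push_cast
    constructor <;> linarith [hθ.1, hθ.2]
  rw [gaussMap_eq_fract, gaussBranch, one_div_one_div, Int.fract, hfloor]
  push_cast
  ring

lemma gaussBranch_gaussMap {x : ℝ} (hx : x ∈ Ioc 0 1) :
    gaussBranch (⌊1 / x⌋ - 1).toNat (gaussMap x) = x := by
  have hfloor : 1 ≤ ⌊1 / x⌋ := Int.le_floor.2 (by exact_mod_cast one_le_one_div hx.1 hx.2)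
  have hn : (((⌊1 / x⌋ - 1).toNat : ℕ) : ℝ) = ⌊1 / x⌋ - 1 := by
    exact_mod_cast Int.toNat_of_nonneg (by omega)
  have hsum : Int.fract (1 / x) + (⌊1 / x⌋ - 1) + 1 = 1 / x := by
    rw [Int.fract]
    ring
  rw [gaussBranch, hn, gaussMap_eq_fract, hsum, one_div_one_div]

lemma add_natCast_add_one_pos (n : ℕ) {θ : ℝ} (hθ : -1 < θ) : 0 < θ + n + 1 := by
  have : (0 : ℝ) ≤ n := n.cast_nonneg
  linarith

lemma gaussBranch_mem_Ioc (n : ℕ) {θ : ℝ} (hθ : 0 ≤ θ) : gaussBranch n θ ∈ Ioc 0 1 := by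
  have h := add_natCast_add_one_pos n (by linarith : -1 < θ)
  refine ⟨by rw [gaussBranch]; positivity, ?_⟩
  rw [gaussBranch, div_le_one h]
  linarith [(n.cast_nonneg : (0 : ℝ) ≤ n)]

lemma hasDerivAt_gaussBranch (n : ℕ) {θ : ℝ} (hθ : -1 < θ) :
    HasDerivAt (gaussBranch n) (-((θ + n + 1) ^ 2)⁻¹) θ := by
  have hlin : HasDerivAt (fun x : ℝ => x + n + 1) 1 θ :=
    ((hasDerivAt_id' θ).add_const _).add_const _
  rw [show gaussBranch n = fun x : ℝ => (x + n + 1)⁻¹ from funext fun x => one_div _]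
  exact (hlin.inv (add_natCast_add_one_pos n hθ).ne').congr_deriv (by ring)

lemma injOn_gaussBranch (n : ℕ) : InjOn (gaussBranch n) (Ico 0 1) :=
  LeftInvOn.injOn fun _ hθ => gaussMap_gaussBranch n hθ

lemma measurableSet_image_gaussBranch (n : ℕ) : MeasurableSet (gaussBranch n '' Ico 0 1) :=
  measurableSet_Ico.image_of_continuousOn_injOn
    (fun θ hθ => (hasDerivAt_gaussBranch n (by linarith [hθ.1])).continuousAt.continuousWithinAt)
    (injOn_gaussBranch n)

lemma pairwise_disjoint_image_gaussBranch :
    Pairwise (Function.onFun Disjoint fun n => gaussBranch n '' Ico 0 1) := by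
  intro m n hmn
  refine disjoint_left.2 ?_
  rintro _ ⟨θ, hθ, rfl⟩ ⟨θ', hθ', h⟩
  obtain rfl : θ' = θ := by
    rw [← gaussMap_gaussBranch n hθ', h, gaussMap_gaussBranch m hθ]
  rw [gaussBranch, gaussBranch, one_div, one_div, inv_inj] at h
  exact hmn (by exact_mod_cast (by linarith : (m : ℝ) = n))

lemma iUnion_image_gaussBranch : ⋃ n, gaussBranch n '' Ico 0 1 = Ioc 0 1 := by
  refine Subset.antisymm (iUnion_subset fun n => ?_) fun x hx => ?_
  · rintro _ ⟨θ, hθ, rfl⟩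
    exact gaussBranch_mem_Ioc n hθ.1
  · exact mem_iUnion.2 ⟨_, gaussMap x, gaussMap_mem_Ico x, gaussBranch_gaussMap hx⟩

lemma inv_sq_mul_gaussDensity_gaussBranch (n : ℕ) {θ : ℝ} (hθ : -1 < θ) :
    ((θ + n + 1) ^ 2)⁻¹ * gaussDensity (gaussBranch n θ) = gaussDensity θ * gaussWeight n θ := by
  have h1 := add_natCast_add_one_pos n hθ
  have h2 : 0 < θ + n + 2 := by linarith
  have h3 : 0 < 1 + θ := by linarith
  have hlog : 0 < Real.log 2 := Real.log_pos one_lt_two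
  unfold gaussDensity gaussWeight gaussBranch
  field_simp
  ring

lemma gaussWeight_nonneg (n : ℕ) {θ : ℝ} (hθ : -1 < θ) : 0 ≤ gaussWeight n θ := by
  have h1 := add_natCast_add_one_pos n hθ
  have h2 : 0 < θ + n + 2 := by linarith
  have h3 : 0 < 1 + θ := by linarith
  unfold gaussWeight
  positivity

lemma hasSum_gaussWeight {θ : ℝ} (hθ : -1 < θ) : HasSum (fun n => gaussWeight n θ) 1 := by
  set u : ℕ → ℝ := fun n => (1 + θ) / (θ + n + 1)
  have hterm : ∀ n : ℕ, gaussWeight n θ = u n - u (n + 1) := by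
    intro n
    have h1 := add_natCast_add_one_pos n hθ
    have h2 : θ + ((n + 1 : ℕ) : ℝ) + 1 = θ + n + 2 := by push_cast; ring
    have h3 : 0 < θ + n + 2 := by linarith
    simp only [u, gaussWeight, h2]
    field_simp
    ring
  have hu0 : u 0 = 1 := by
    simp only [u, Nat.cast_zero, add_zero]
    exact (div_eq_one_iff_eq (by linarith)).2 (add_comm _ _)
  have hu : Tendsto u atTop (nhds 0) :=
    tendsto_const_nhds.div_atTop <| tendsto_atTop_add_const_right _ 1 <|
      tendsto_atTop_add_const_left _ θ tendsto_natCast_atTop_atTop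
  rw [hasSum_iff_tendsto_nat_of_nonneg fun n => gaussWeight_nonneg n hθ]
  simp_rw [hterm, Finset.sum_range_sub']
  simpa [hu0] using tendsto_const_nhds.sub hu

lemma tsum_ofReal_gaussWeight {θ : ℝ} (hθ : -1 < θ) :
    ∑' n, ENNReal.ofReal (gaussWeight n θ) = 1 := by
  rw [← ENNReal.ofReal_tsum_of_nonneg (gaussWeight_nonneg · hθ) (hasSum_gaussWeight hθ).summable,
    (hasSum_gaussWeight hθ).tsum_eq, ENNReal.ofReal_one]

lemma measurable_gaussWeight (n : ℕ) : Measurable (gaussWeight n) := by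
  unfold gaussWeight
  fun_prop

lemma hasDerivWithinAt_gaussBranch (n : ℕ) :
    ∀ θ ∈ Ico (0 : ℝ) 1, HasDerivWithinAt (gaussBranch n) (-((θ + n + 1) ^ 2)⁻¹) (Ico 0 1) θ :=
  fun _ hθ => (hasDerivAt_gaussBranch n (by linarith [hθ.1])).hasDerivWithinAt

lemma lintegral_Icc_eq_tsum_gaussBranch (F : ℝ → ℝ≥0∞) :
    ∫⁻ x in Icc 0 1, F x =
      ∑' n : ℕ, ∫⁻ θ in Ico 0 1, ENNReal.ofReal ((θ + n + 1) ^ 2)⁻¹ * F (gaussBranch n θ) := by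
  rw [setLIntegral_congr Ioc_ae_eq_Icc.symm, ← iUnion_image_gaussBranch,
    lintegral_iUnion measurableSet_image_gaussBranch pairwise_disjoint_image_gaussBranch]
  refine tsum_congr fun n => ?_
  rw [lintegral_image_eq_lintegral_abs_deriv_mul measurableSet_Ico
    (hasDerivWithinAt_gaussBranch n) (injOn_gaussBranch n)]
  simp only [abs_neg, abs_inv, abs_pow, sq_abs]

lemma integrableOn_Ico_gaussBranch {F : ℝ → ℝ} (hF : IntegrableOn F (Icc 0 1)) (n : ℕ) :
    IntegrableOn (fun θ : ℝ => ((θ + n + 1) ^ 2)⁻¹ * F (gaussBranch n θ)) (Ico (0 : ℝ) 1) := by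
  have himage : gaussBranch n '' Ico 0 1 ⊆ Icc 0 1 :=
    image_subset_iff.2 fun θ hθ => Ioc_subset_Icc_self (gaussBranch_mem_Ioc n hθ.1)
  simpa only [smul_eq_mul, abs_neg, abs_inv, abs_pow, sq_abs] using
    (integrableOn_image_iff_integrableOn_abs_deriv_smul measurableSet_Ico
      (hasDerivWithinAt_gaussBranch n) (injOn_gaussBranch n) F).1 (hF.mono_set himage)

lemma integral_Icc_eq_tsum_gaussBranch {F : ℝ → ℝ} (hF : IntegrableOn F (Icc 0 1)) :
    ∫ x in Icc 0 1, F x =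
      ∑' n : ℕ, ∫ θ in Ico (0 : ℝ) 1, ((θ + n + 1) ^ 2)⁻¹ * F (gaussBranch n θ) := by
  have hF' : IntegrableOn F (⋃ n, gaussBranch n '' Ico 0 1) := by
    rw [iUnion_image_gaussBranch]
    exact hF.mono_set Ioc_subset_Icc_self
  rw [setIntegral_congr_set Ioc_ae_eq_Icc.symm, ← iUnion_image_gaussBranch,
    integral_iUnion measurableSet_image_gaussBranch pairwise_disjoint_image_gaussBranch hF']
  refine tsum_congr fun n => ?_
  rw [integral_image_eq_integral_abs_deriv_smul measurableSet_Ico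
    (hasDerivWithinAt_gaussBranch n) (injOn_gaussBranch n)]
  simp only [smul_eq_mul, abs_neg, abs_inv, abs_pow, sq_abs]

lemma measurable_gaussDensity : Measurable gaussDensity := by
  unfold gaussDensity
  fun_prop

lemma gaussDensity_pos {θ : ℝ} (hθ : -1 < θ) : 0 < gaussDensity θ := by
  have hlog : 0 < Real.log 2 := Real.log_pos one_lt_two
  have h : 0 < 1 + θ := by linarith
  unfold gaussDensity
  positivity

lemma gaussMeasure_eq_withDensity :
    gaussMeasure = (volume.restrict (Icc 0 1)).withDensity
      fun θ => ((gaussDensity θ).toNNReal : ℝ≥0∞) := rfl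

lemma ae_gaussMeasure_mem_Ico : ∀ᵐ θ ∂gaussMeasure, θ ∈ Ico (0 : ℝ) 1 :=
  (withDensity_absolutelyContinuous _ _).ae_le <|
    ae_restrict_of_ae_eq_of_ae_restrict Ico_ae_eq_Icc (ae_restrict_mem measurableSet_Ico)

lemma lintegral_gaussMeasure (F : ℝ → ℝ≥0∞) :
    ∫⁻ x, F x ∂gaussMeasure = ∫⁻ x in Icc 0 1, ENNReal.ofReal (gaussDensity x) * F x :=
  lintegral_withDensity_eq_lintegral_mul_non_measurable _
    measurable_gaussDensity.ennreal_ofReal (ae_of_all _ fun _ => ENNReal.ofReal_lt_top) F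

lemma integral_gaussMeasure_s11 (F : ℝ → ℝ) :
    ∫ x, F x ∂gaussMeasure = ∫ x in Icc 0 1, gaussDensity x * F x := by
  rw [gaussMeasure_eq_withDensity,
    integral_withDensity_eq_integral_smul measurable_gaussDensity.real_toNNReal]
  refine setIntegral_congr_fun measurableSet_Icc fun x hx => ?_
  rw [NNReal.smul_def, Real.coe_toNNReal _ (gaussDensity_pos (by linarith [hx.1])).le, smul_eq_mul]

lemma integrable_gaussMeasure_iff {F : ℝ → ℝ} :
    Integrable F gaussMeasure ↔ IntegrableOn (fun x => gaussDensity x * F x) (Icc 0 1) := by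
  rw [gaussMeasure_eq_withDensity,
    integrable_withDensity_iff_integrable_smul measurable_gaussDensity.real_toNNReal]
  refine integrableOn_congr_fun (fun x hx => ?_) measurableSet_Icc
  rw [NNReal.smul_def, Real.coe_toNNReal _ (gaussDensity_pos (by linarith [hx.1])).le, smul_eq_mul]

lemma inv_sq_mul_gaussDensity_gaussBranch_mul (n : ℕ) {θ : ℝ} (hθ : -1 < θ) (a : ℝ) :
    ((θ + n + 1) ^ 2)⁻¹ * (gaussDensity (gaussBranch n θ) * a) =
      gaussDensity θ * (a * gaussWeight n θ) := by
  rw [← mul_assoc, inv_sq_mul_gaussDensity_gaussBranch n hθ]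
  ring

theorem lintegral_gaussMeasure_eq_tsum (F : ℝ → ℝ≥0∞) :
    ∫⁻ x, F x ∂gaussMeasure =
      ∑' n : ℕ, ∫⁻ θ, F (gaussBranch n θ) * ENNReal.ofReal (gaussWeight n θ) ∂gaussMeasure := by
  rw [lintegral_gaussMeasure, lintegral_Icc_eq_tsum_gaussBranch]
  refine tsum_congr fun n => ?_
  rw [lintegral_gaussMeasure, setLIntegral_congr Ico_ae_eq_Icc.symm]
  refine setLIntegral_congr_fun measurableSet_Ico fun θ hθ => ?_
  have hθ' : -1 < θ := by linarith [hθ.1]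
  rw [← mul_assoc, ← ENNReal.ofReal_mul (by positivity),
    inv_sq_mul_gaussDensity_gaussBranch n hθ', ENNReal.ofReal_mul (gaussDensity_pos hθ').le,
    mul_assoc, mul_comm (ENNReal.ofReal (gaussWeight n θ))]

theorem MeasureTheory.Integrable.gaussBranch_mul_gaussWeight {Φ : ℝ → ℝ}
    (hΦ : Integrable Φ gaussMeasure) (n : ℕ) :
    Integrable (fun θ => Φ (gaussBranch n θ) * gaussWeight n θ) gaussMeasure := by
  rw [integrable_gaussMeasure_iff, integrableOn_Icc_iff_integrableOn_Ico]
  refine (integrableOn_Ico_gaussBranch (integrable_gaussMeasure_iff.1 hΦ) n).congr_fun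
    (fun θ hθ => ?_) measurableSet_Ico
  exact inv_sq_mul_gaussDensity_gaussBranch_mul n (by linarith [hθ.1]) _

theorem integral_gaussMeasure_eq_tsum {Φ : ℝ → ℝ} (hΦ : Integrable Φ gaussMeasure) :
    ∫ x, Φ x ∂gaussMeasure =
      ∑' n : ℕ, ∫ θ, Φ (gaussBranch n θ) * gaussWeight n θ ∂gaussMeasure := by
  rw [integral_gaussMeasure_s11, integral_Icc_eq_tsum_gaussBranch (integrable_gaussMeasure_iff.1 hΦ)]
  refine tsum_congr fun n => ?_
  rw [integral_gaussMeasure_s11, setIntegral_congr_set Ico_ae_eq_Icc.symm]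
  exact setIntegral_congr_fun measurableSet_Ico fun θ hθ =>
    inv_sq_mul_gaussDensity_gaussBranch_mul n (by linarith [hθ.1]) _

theorem integral_gaussOp {Φ : ℝ → ℝ} (hΦ : Integrable Φ gaussMeasure) :
    ∫ θ, gaussOp Φ θ ∂gaussMeasure = ∫ θ, Φ θ ∂gaussMeasure := by
  have hnorm : ∑' n : ℕ, ∫⁻ θ, ‖Φ (gaussBranch n θ) * gaussWeight n θ‖ₑ ∂gaussMeasure =
      ∫⁻ x, ‖Φ x‖ₑ ∂gaussMeasure := by
    rw [lintegral_gaussMeasure_eq_tsum]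
    refine tsum_congr fun n => lintegral_congr_ae ?_
    filter_upwards [ae_gaussMeasure_mem_Ico] with θ hθ
    rw [enorm_mul, Real.enorm_of_nonneg (gaussWeight_nonneg n (by linarith [hθ.1]))]
  simp only [gaussOp_eq_tsum]
  rw [integral_tsum (fun n => (hΦ.gaussBranch_mul_gaussWeight n).1) (hnorm ▸ hΦ.2.ne),
    integral_gaussMeasure_eq_tsum hΦ]

theorem measurePreserving_gaussMap : MeasurePreserving gaussMap gaussMeasure gaussMeasure := by
  refine ⟨measurable_gaussMap, Measure.ext fun A hA => ?_⟩
  rw [Measure.map_apply measurable_gaussMap hA, ← lintegral_indicator_one (measurable_gaussMap hA),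
    ← lintegral_indicator_one hA, lintegral_gaussMeasure_eq_tsum]
  calc ∑' n : ℕ, ∫⁻ θ, (gaussMap ⁻¹' A).indicator 1 (gaussBranch n θ) *
          ENNReal.ofReal (gaussWeight n θ) ∂gaussMeasure
      = ∑' n : ℕ, ∫⁻ θ, A.indicator 1 θ * ENNReal.ofReal (gaussWeight n θ) ∂gaussMeasure := by
        refine tsum_congr fun n => lintegral_congr_ae ?_
        filter_upwards [ae_gaussMeasure_mem_Ico] with θ hθ
        have h : (gaussMap ⁻¹' A).indicator (1 : ℝ → ℝ≥0∞) (gaussBranch n θ) =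
            A.indicator 1 (gaussMap (gaussBranch n θ)) :=
          indicator_comp_right (g := (1 : ℝ → ℝ≥0∞)) gaussMap
        rw [h, gaussMap_gaussBranch n hθ]
    _ = ∫⁻ θ, ∑' n : ℕ, A.indicator 1 θ * ENNReal.ofReal (gaussWeight n θ) ∂gaussMeasure :=
        (lintegral_tsum fun n => ((measurable_one.indicator hA).mul
          (measurable_gaussWeight n).ennreal_ofReal).aemeasurable).symm
    _ = ∫⁻ θ, A.indicator 1 θ ∂gaussMeasure := by
        refine lintegral_congr_ae ?_
        filter_upwards [ae_gaussMeasure_mem_Ico] with θ hθ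
        rw [ENNReal.tsum_mul_left, tsum_ofReal_gaussWeight (by linarith [hθ.1]), mul_one]

lemma MeasureTheory.MeasurePreserving.integrable_mul_comp_mul_comp {α : Type*} [MeasurableSpace α]
    {μ : Measure α} {T : α → α} (hT : MeasurePreserving T μ μ) {f g h : α → ℝ} {C : ℝ}
    (hf : AEStronglyMeasurable f μ) (hfC : ∀ᵐ x ∂μ, ‖f x‖ ≤ C)
    (hg : MemLp g 2 μ) (hh : MemLp h 2 μ) :
    Integrable (fun x => f x * g (T x) * h (T x)) μ := by
  have hgh : Integrable ((g ∘ T) * (h ∘ T)) μ :=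
    (hg.comp_measurePreserving hT).integrable_mul (hh.comp_measurePreserving hT)
  simpa only [mul_assoc, Pi.mul_apply, Function.comp_apply] using hgh.bdd_mul hf hfC

/-- For `f` continuous on `[0,1]` and `g, h ∈ L²(μ)`:
`∫ f(θ) g(G θ) h(G θ) dμ = ∫ 𝔾(f)(θ) g(θ) h(θ) dμ`, i.e.
`V_G* M_f V_G = M_{𝔾(f)}` on `L²(μ)`. -/
theorem gaussOp_conjugation (f g h : ℝ → ℝ)
    (hf : ContinuousOn f (Set.Icc (0 : ℝ) 1))
    (hg : MemLp g 2 gaussMeasure) (hh : MemLp h 2 gaussMeasure) :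
    ∫ θ, f θ * g (gaussMap θ) * h (gaussMap θ) ∂gaussMeasure =
      ∫ θ, gaussOp f θ * g θ * h θ ∂gaussMeasure := by
  obtain ⟨C, hC⟩ := isCompact_Icc.exists_bound_of_continuousOn hf
  have hΦ := measurePreserving_gaussMap.integrable_mul_comp_mul_comp
    ((hf.aestronglyMeasurable measurableSet_Icc).mono_ac (withDensity_absolutelyContinuous _ _))
    (ae_gaussMeasure_mem_Ico.mono fun θ hθ => hC θ (Ico_subset_Icc_self hθ)) hg hh
  rw [← integral_gaussOp hΦ]
  refine integral_congr_ae ?_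
  filter_upwards [ae_gaussMeasure_mem_Ico] with θ hθ
  simp only [gaussOp_eq_tsum, gaussMap_gaussBranch _ hθ, ← tsum_mul_right]
  exact tsum_congr fun n => by ring
end
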